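/- arXiv:math/0610459 — 4 statements merged into one kernel-verified Lean document; each statement's English description precedes it below -/
import Mathlib

section
/- The number of forests consisting of s rooted trees whose s root vertices are distinguishable but unlabelled, and whose r non-root vertices are labelled 1,...,r, equals s·(r+s)^(r-1). -/
/-- A rooted forest with `r` labelled non-root vertices (labelled `1,...,r`,
here `Fin r`) and `s` distinguishable but unlabelled roots (here `Fin s`),
encoded by its parent function: each non-root vertex points to its parent
(either another non-root vertex, `Sum.inl`, or one of the roots, `Sum.inr`),
and iterating the parent map from any non-root vertex eventually reaches a
root (this expresses acyclicity, i.e. that the structure is a forest). -/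
def IsForestParentFn (r s : ℕ) (f : Fin r → Fin r ⊕ Fin s) : Prop :=
  ∀ v : Fin r, ∃ (k : ℕ) (w : Fin s),
    (fun x => Sum.elim f Sum.inr x)^[k] (Sum.inl v) = Sum.inr w

open Polynomial Finset


open Polynomial Finset

lemma comp_sub_degree_lt (p : ℚ[X]) (hp : p ≠ 0) :
    (p - p.comp (X + C 1)).degree < p.degree := by
  have hc0 : p.comp (X + C 1) ≠ 0 := fun h => by
    have := natDegree_comp (p := p) (q := X + C 1)
    have hlc : (p.comp (X + C 1)).leadingCoeff = p.leadingCoeff := by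
      rw [Polynomial.leadingCoeff_comp (by rw [natDegree_X_add_C]; exact one_ne_zero)]
      rw [leadingCoeff_X_add_C]; ring
    rw [h] at hlc
    exact hp (leadingCoeff_eq_zero.mp hlc.symm)
  have hnd : (p.comp (X + C 1)).natDegree = p.natDegree := by
    rw [natDegree_comp, natDegree_X_add_C, mul_one]
  have hd : (p.comp (X + C 1)).degree = p.degree := by
    rw [degree_eq_natDegree hc0, degree_eq_natDegree hp, hnd]
  have hlc : p.leadingCoeff = (p.comp (X + C 1)).leadingCoeff := by
    rw [Polynomial.leadingCoeff_comp (by rw [natDegree_X_add_C]; exact one_ne_zero)]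
    rw [leadingCoeff_X_add_C]; ring
  by_cases he : p = p.comp (X + C 1)
  · rw [← he, sub_self, degree_zero]
    exact Ne.bot_lt' (fun h => hp (degree_eq_bot.mp h.symm))
  · exact degree_sub_lt hd.symm hp hlc

/-- Finite difference lemma. -/
lemma findiff (m : ℕ) : ∀ p : ℚ[X], p.degree < (m : ℕ) →
    ∑ k ∈ range (m+1), (-1:ℚ)^k * (m.choose k) * p.eval (k:ℚ) = 0 := by
  induction m with
  | zero =>
    intro p hp
    have h0 : p = 0 := by
      rw [← Polynomial.degree_eq_bot]
      exact Nat.WithBot.lt_zero_iff.mp (by exact_mod_cast hp)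
    simp [h0]
  | succ m ih =>
    intro p hp
    have key : ∑ k ∈ range (m+2), (-1:ℚ)^k * ((m+1).choose k) * p.eval (k:ℚ)
        = ∑ k ∈ range (m+1), (-1:ℚ)^k * (m.choose k) * (p.eval (k:ℚ) - p.eval ((k:ℚ)+1)) := by
      have e1 : ∑ k ∈ range (m+2), (-1:ℚ)^k * ((m+1).choose k) * p.eval (k:ℚ)
          = ∑ k ∈ range (m+2), ((-1:ℚ)^k * (m.choose k) * p.eval (k:ℚ)
              + (-1:ℚ)^k * (if k = 0 then (0:ℚ) else ((m.choose (k-1) : ℕ) : ℚ)) * p.eval (k:ℚ)) := by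
        apply Finset.sum_congr rfl
        intro k _
        rcases Nat.eq_zero_or_pos k with h | h
        · subst h; simp
        · obtain ⟨j, rfl⟩ := Nat.exists_eq_succ_of_ne_zero h.ne'
          rw [Nat.choose_succ_succ']
          simp only [Nat.succ_ne_zero, if_false, Nat.succ_sub_one]
          push_cast
          ring
      rw [e1, Finset.sum_add_distrib]
      have e2 : ∑ k ∈ range (m+2), (-1:ℚ)^k * (m.choose k) * p.eval (k:ℚ)
          = ∑ k ∈ range (m+1), (-1:ℚ)^k * (m.choose k) * p.eval (k:ℚ) := by
        rw [Finset.sum_range_succ]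
        simp [Nat.choose_eq_zero_of_lt (Nat.lt_succ_self m)]
      have e3 : ∑ k ∈ range (m+2),
            (-1:ℚ)^k * (if k = 0 then (0:ℚ) else ((m.choose (k-1) : ℕ) : ℚ)) * p.eval (k:ℚ)
          = ∑ k ∈ range (m+1), -((-1:ℚ)^k * (m.choose k) * p.eval ((k:ℚ)+1)) := by
        rw [Finset.sum_range_succ' (fun k =>
          (-1:ℚ)^k * (if k = 0 then (0:ℚ) else ((m.choose (k-1) : ℕ) : ℚ)) * p.eval (k:ℚ))]
        simp only [reduceIte, Nat.succ_ne_zero, if_false, mul_zero, zero_mul, add_zero,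
          Nat.add_eq_zero, and_false]
        apply Finset.sum_congr rfl
        intro k _
        simp only [Nat.succ_sub_one, pow_succ]
        push_cast
        ring
      rw [e2, e3, ← Finset.sum_add_distrib]
      apply Finset.sum_congr rfl
      intro k _
      ring
    rw [key]
    set q : ℚ[X] := p - p.comp (X + C 1) with hq
    have hqe : ∀ k : ℕ, p.eval (k:ℚ) - p.eval ((k:ℚ)+1) = q.eval (k:ℚ) := by
      intro k; simp [hq, Polynomial.eval_comp]
    have hqd : q.degree < (m : ℕ) := by
      by_cases hp0 : p = 0
      · simp [hq, hp0]
      · have h1 : q.degree < p.degree := comp_sub_degree_lt p hp0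
        have h2 : p.degree ≤ (m : ℕ) := by
          rw [degree_eq_natDegree hp0] at hp ⊢
          have : p.natDegree < m + 1 := by exact_mod_cast hp
          exact_mod_cast Nat.cast_le.mpr (Nat.lt_succ_iff.mp this)
        exact lt_of_lt_of_le h1 h2
    calc ∑ k ∈ range (m+1), (-1:ℚ)^k * (m.choose k) * (p.eval (k:ℚ) - p.eval ((k:ℚ)+1))
        = ∑ k ∈ range (m+1), (-1:ℚ)^k * (m.choose k) * q.eval (k:ℚ) := by
          exact Finset.sum_congr rfl (fun k _ => by rw [hqe])
      _ = 0 := ih q hqd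


open Polynomial Finset

noncomputable def abelP (x : ℚ) (n : ℕ) : ℚ[X] :=
  (X + C (x + n))^n - (X + C (n:ℚ))^n
    - ∑ k ∈ Finset.Icc 1 n,
        C ((n.choose k : ℚ) * x * (x + k)^(k-1)) * (X + C (((n-k : ℕ):ℚ)))^(n-k)

lemma neg_one_pow_sub {m k : ℕ} (h : k ≤ m) : (-1:ℚ)^(m-k) = (-1)^m * (-1)^k := by
  have h2 : m - k + 2*k = m + k := by omega
  have : ((-1:ℚ)^(m-k)) * ((-1)^2)^k = (-1)^(m+k) := by
    rw [← pow_mul, ← pow_add, h2]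
  simpa [pow_add] using this

lemma shiftC (a : ℚ) : X + C 1 + C a = X + C (a+1) := by rw [C_add]; ring

lemma abelP_eq_zero (x : ℚ) : ∀ n, abelP x n = 0 := by
  intro n
  induction n with
  | zero => simp [abelP]
  | succ n ih =>
    have comp_eq : (abelP x n).comp (X + C 1)
        = (X + C (x + ((n+1:ℕ):ℚ)))^n - (X + C (((n+1:ℕ):ℚ)))^n
          - ∑ k ∈ Icc 1 n,
              C ((n.choose k : ℚ) * x * (x + k)^(k-1)) * (X + C ((((n+1)-k:ℕ):ℚ)))^(n-k) := by
      unfold abelP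
      simp only [sub_comp, Polynomial.sum_comp, mul_comp, pow_comp, add_comp, X_comp, C_comp,
        shiftC]
      congr 1
      · congr 1
        · congr 2
          push_cast; ring
        · congr 2
          push_cast; ring
      · apply Finset.sum_congr rfl
        intro k hk
        simp only [mem_Icc] at hk
        congr 3
        rw [Nat.cast_sub hk.2, Nat.cast_sub (by omega : k ≤ n+1)]
        push_cast; ring
    have hder : derivative (abelP x (n+1))
        = C ((n:ℚ)+1) * ((abelP x n).comp (X + C 1)) := by
      rw [comp_eq]
      unfold abelP
      rw [derivative_sub, derivative_sub, derivative_sum]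
      simp only [derivative_pow, derivative_add, derivative_X, derivative_C, add_zero, mul_one,
        derivative_mul, zero_mul, zero_add, Nat.add_sub_cancel]
      rw [Finset.sum_Icc_succ_top (by omega : 1 ≤ n+1)]
      simp only [Nat.sub_self, Nat.cast_zero, map_zero, zero_mul, mul_zero, add_zero]
      rw [mul_sub, mul_sub, Finset.mul_sum]
      refine congrArg₂ (· - ·) ?_ ?_
      · refine congrArg₂ (· - ·) ?_ ?_
        · rw [show (C (((n+1:ℕ):ℚ)) : ℚ[X]) = C ((n:ℚ)+1) from by push_cast; ring]
        · rw [show (C (((n+1:ℕ):ℚ)) : ℚ[X]) = C ((n:ℚ)+1) from by push_cast; ring]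
      · apply Finset.sum_congr rfl
        intro k hk
        simp only [mem_Icc] at hk
        have e1 : (n+1) - k - 1 = n - k := by omega
        rw [e1]
        have hch : ((n.choose k : ℕ) : ℚ) * ((n:ℚ)+1) = (((n+1).choose k : ℕ) : ℚ) * (((n+1) - k : ℕ) : ℚ) := by
          exact_mod_cast congrArg (Nat.cast : ℕ → ℚ) (Nat.choose_mul_succ_eq n k)
        simp only [← mul_assoc, ← C_mul]
        congr 1
        apply congrArg
        linear_combination (-(x * (x + (k:ℚ))^(k-1))) * hch
    have hd0 : derivative (abelP x (n+1)) = 0 := by rw [hder, ih]; simp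
    have hC := eq_C_of_derivative_eq_zero hd0
    have heval : (abelP x (n+1)).eval (-x - ((n:ℚ)+1)) = 0 := by
      have hdeg : ((X + C x)^n : ℚ[X]).degree < ((n+1 : ℕ) : ℕ) := by
        rw [degree_pow, degree_X_add_C]
        simp only [nsmul_eq_mul, mul_one]
        exact_mod_cast Nat.lt_succ_self n
      have hfd := findiff (n+1) ((X + C x)^n) hdeg
      simp only [eval_pow, eval_add, eval_X, eval_C] at hfd
      unfold abelP
      simp only [eval_sub, eval_pow, eval_add, eval_X, eval_C, eval_finset_sum, eval_mul]
      have e1 : -x - ((n:ℚ)+1) + (x + ((n+1 : ℕ):ℚ)) = 0 := by push_cast; ring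
      rw [e1, zero_pow (by omega : n+1 ≠ 0)]
      have e2 : -x - ((n:ℚ)+1) + (((n+1 : ℕ)):ℚ) = -x := by push_cast; ring
      rw [e2]
      have e3 : ∑ k ∈ Icc 1 (n+1),
          ((((n+1).choose k : ℚ)) * x * (x + k)^(k-1)) * (-x - ((n:ℚ)+1) + (((n+1)-k : ℕ):ℚ))^((n+1)-k)
          = ∑ k ∈ Icc 1 (n+1), (-1:ℚ)^(n+1) * ((-1:ℚ)^k * ((n+1).choose k) * ((k:ℚ) + x)^n) * x := by
        apply Finset.sum_congr rfl
        intro k hk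
        simp only [mem_Icc] at hk
        have hb : -x - ((n:ℚ)+1) + (((n+1)-k : ℕ):ℚ) = -(x + k) := by
          rw [Nat.cast_sub (by omega : k ≤ n+1)]
          push_cast; ring
        rw [hb, neg_pow]
        have hpows : ((k:ℚ) + x)^(k-1) * ((k:ℚ) + x)^((n+1)-k) = ((k:ℚ)+x)^n := by
          rw [← pow_add]
          congr 1
          omega
        have hsign : (-1:ℚ)^((n+1)-k) = (-1)^(n+1) * (-1)^k := neg_one_pow_sub (by omega)
        rw [hsign]
        rw [show ((x:ℚ) + (k:ℚ)) = ((k:ℚ) + x) from by ring]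
        linear_combination (((n+1).choose k : ℚ) * x * (-1:ℚ)^(n+1) * (-1:ℚ)^k) * hpows
      rw [e3, ← Finset.sum_mul, ← Finset.mul_sum]
      have e4 : ∑ k ∈ Icc 1 (n+1), ((-1:ℚ)^k * (((n+1).choose k : ℕ):ℚ) * ((k:ℚ) + x)^n)
          = - ((-1:ℚ)^0 * (((n+1).choose 0 : ℕ):ℚ) * (((0:ℕ):ℚ) + x)^n) := by
        rw [Finset.sum_range_succ' (fun k => (-1:ℚ)^k * (((n+1).choose k : ℕ):ℚ) * ((k:ℚ) + x)^n)] at hfd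
        have hIcc : ∑ k ∈ Icc 1 (n+1), ((-1:ℚ)^k * (((n+1).choose k : ℕ):ℚ) * ((k:ℚ) + x)^n)
            = ∑ i ∈ range (n+1), ((-1:ℚ)^(i+1) * (((n+1).choose (i+1) : ℕ):ℚ) * (((i:ℚ)+1) + x)^n) := by
          rw [← Finset.Ico_add_one_right_eq_Icc, Finset.sum_Ico_eq_sum_range]
          apply Finset.sum_congr (by norm_num)
          intro i _
          have : 1 + i = i + 1 := by omega
          rw [this]
          push_cast
          ring
        rw [hIcc]
        have := hfd
        push_cast at this ⊢
        linarith [this]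
      rw [e4]
      simp only [pow_zero, Nat.choose_zero_right, Nat.cast_one, Nat.cast_zero]
      rw [neg_pow]
      push_cast
      ring
    rw [hC] at heval ⊢
    rw [eval_C] at heval
    rw [heval]
    simp


lemma abel_nat (s n : ℕ) :
    ∑ k ∈ range (n+1), (n.choose k) * (if k = 0 then 1 else s*(k+s)^(k-1)) * (n-k)^(n-k)
      = (n+s)^n := by
  have h := congrArg (Polynomial.eval (0:ℚ)) (abelP_eq_zero (s:ℚ) n)
  simp only [abelP, eval_sub, eval_pow, eval_add, eval_X, eval_C, eval_finset_sum, eval_mul,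
    eval_zero, zero_add] at h
  have key : ((∑ k ∈ range (n+1), (n.choose k) * (if k = 0 then 1 else s*(k+s)^(k-1)) * (n-k)^(n-k) : ℕ) : ℚ)
      = (((n+s)^n : ℕ) : ℚ) := by
    rw [Nat.cast_sum]
    rw [Finset.range_eq_Ico, ← Finset.sum_Ico_consecutive _ (by omega : (0:ℕ) ≤ 1) (by omega : 1 ≤ n+1)]
    have h0 : ∑ k ∈ Finset.Ico 0 1, ((n.choose k * (if k = 0 then 1 else s*(k+s)^(k-1)) * (n-k)^(n-k) : ℕ) : ℚ)
        = ((n:ℚ))^n := by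
      simp
    rw [h0, Finset.Ico_add_one_right_eq_Icc]
    have h1 : ∑ k ∈ Finset.Icc 1 n, ((n.choose k * (if k = 0 then 1 else s*(k+s)^(k-1)) * (n-k)^(n-k) : ℕ) : ℚ)
        = ∑ k ∈ Finset.Icc 1 n, ((n.choose k : ℚ)) * (s:ℚ) * ((s:ℚ)+k)^(k-1) * ((n-k : ℕ):ℚ)^(n-k) := by
      apply Finset.sum_congr rfl
      intro k hk
      simp only [mem_Icc] at hk
      rw [if_neg (by omega)]
      push_cast
      ring
    rw [h1]
    push_cast
    rw [add_comm (n:ℚ) (s:ℚ)]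
    linear_combination -h
  exact_mod_cast key



section ForestDefs
variable {V : Type*} {s : ℕ}

def pstep (f : V → V ⊕ Fin s) : V ⊕ Fin s → V ⊕ Fin s := Sum.elim f Sum.inr

def Reaches (f : V → V ⊕ Fin s) (v : V) : Prop :=
  ∃ k w, (pstep f)^[k] (Sum.inl v) = Sum.inr w

def ForestFn (f : V → V ⊕ Fin s) : Prop := ∀ v, Reaches f v

lemma reaches_of_inr {f : V → V ⊕ Fin s} {v w} (h : f v = Sum.inr w) : Reaches f v :=
  ⟨1, w, by simp [pstep, h]⟩

lemma reaches_of_inl {f : V → V ⊕ Fin s} {v u} (h : f v = Sum.inl u) (hu : Reaches f u) :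
    Reaches f v := by
  obtain ⟨k, w, hk⟩ := hu
  exact ⟨k+1, w, by rw [Function.iterate_succ_apply]; simpa [pstep, h] using hk⟩

lemma reaches_tail {f : V → V ⊕ Fin s} {v u} (h : Reaches f v) (hfv : f v = Sum.inl u) :
    Reaches f u := by
  obtain ⟨k, w, hk⟩ := h
  cases k with
  | zero => simp at hk
  | succ k =>
    rw [Function.iterate_succ_apply] at hk
    exact ⟨k, w, by simpa [pstep, hfv] using hk⟩

end ForestDefs

section Relabel
variable {V₁ V₂ : Type*} {s : ℕ}

def mapFn (e : V₁ ≃ V₂) (f : V₁ → V₁ ⊕ Fin s) : V₂ → V₂ ⊕ Fin s :=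
  fun v => Sum.map e id (f (e.symm v))

lemma pstep_mapFn (e : V₁ ≃ V₂) (f : V₁ → V₁ ⊕ Fin s) (x : V₁ ⊕ Fin s) :
    ∀ k, (pstep (mapFn e f))^[k] (Sum.map e id x) = Sum.map e id ((pstep f)^[k] x) := by
  intro k
  induction k generalizing x with
  | zero => rfl
  | succ k ih =>
    rw [Function.iterate_succ_apply, Function.iterate_succ_apply]
    have : pstep (mapFn e f) (Sum.map e id x) = Sum.map e id (pstep f x) := by
      cases x with
      | inl v => simp [pstep, mapFn]
      | inr w => simp [pstep]
    rw [this, ih]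

lemma forestFn_mapFn (e : V₁ ≃ V₂) {f : V₁ → V₁ ⊕ Fin s} (hf : ForestFn f) :
    ForestFn (mapFn e f) := by
  intro v
  obtain ⟨k, w, hk⟩ := hf (e.symm v)
  refine ⟨k, w, ?_⟩
  have := pstep_mapFn e f (Sum.inl (e.symm v)) k
  simp only [Sum.map_inl, Equiv.apply_symm_apply] at this
  rw [this, hk]
  rfl

lemma mapFn_mapFn (e : V₁ ≃ V₂) (f : V₁ → V₁ ⊕ Fin s) :
    mapFn e.symm (mapFn e f) = f := by
  funext v
  simp only [mapFn, Equiv.symm_symm, Equiv.apply_symm_apply]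
  cases h : f v <;> simp [h]

/-- relabeling equivalence of forest functions. -/
def forestEquiv (e : V₁ ≃ V₂) :
    {f : V₁ → V₁ ⊕ Fin s // ForestFn f} ≃ {f : V₂ → V₂ ⊕ Fin s // ForestFn f} where
  toFun := fun ⟨f, hf⟩ => ⟨mapFn e f, forestFn_mapFn e hf⟩
  invFun := fun ⟨f, hf⟩ => ⟨mapFn e.symm f, forestFn_mapFn e.symm hf⟩
  left_inv := fun ⟨f, hf⟩ => Subtype.ext (mapFn_mapFn e f)
  right_inv := fun ⟨f, hf⟩ => Subtype.ext (by
    have := mapFn_mapFn e.symm f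
    simpa using this)

end Relabel

section Decomp
variable {V : Type*} [Fintype V] [DecidableEq V] {s : ℕ}

open Classical in
noncomputable def reachSet (f : V → V ⊕ Fin s) : Finset V :=
  {v ∈ univ | Reaches f v}

lemma mem_reachSet {f : V → V ⊕ Fin s} {v : V} : v ∈ reachSet f ↔ Reaches f v := by
  classical
  simp [reachSet]

variable (A : Finset V)

def restrictFn (f : V → V ⊕ Fin s)
    (h1 : ∀ v ∈ A, ∀ u, f v = Sum.inl u → u ∈ A) : A → (A : Finset V) ⊕ Fin s :=
  fun v => match hfv : f v.1 with
  | Sum.inl u => Sum.inl ⟨u, h1 v.1 v.2 u hfv⟩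
  | Sum.inr w => Sum.inr w

lemma restrictFn_inl {f : V → V ⊕ Fin s} {h1} {v : A} {u : V} (hfv : f v.1 = Sum.inl u)
    (hu : u ∈ A) : restrictFn A f h1 v = Sum.inl ⟨u, hu⟩ := by
  unfold restrictFn
  split
  · rename_i u' h'
    rw [hfv] at h'
    cases h'
    rfl
  · rename_i w h'
    rw [hfv] at h'
    cases h'

lemma restrictFn_inr {f : V → V ⊕ Fin s} {h1} {v : A} {w : Fin s} (hfv : f v.1 = Sum.inr w) :
    restrictFn A f h1 v = Sum.inr w := by
  unfold restrictFn
  split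
  · rename_i u' h'
    rw [hfv] at h'
    cases h'
  · rename_i w' h'
    rw [hfv] at h'
    cases h'
    rfl

def corestrictFn (f : V → V ⊕ Fin s)
    (h2 : ∀ v ∉ A, ∀ u, f v = Sum.inl u → u ∉ A)
    (h3 : ∀ v ∉ A, ∀ w, f v ≠ Sum.inr w) : (Aᶜ : Finset V) → (Aᶜ : Finset V) :=
  fun v => match hfv : f v.1 with
  | Sum.inl u => ⟨u, Finset.mem_compl.mpr (h2 v.1 (Finset.mem_compl.mp v.2) u hfv)⟩
  | Sum.inr w => absurd hfv (h3 v.1 (Finset.mem_compl.mp v.2) w)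

lemma corestrictFn_spec {f : V → V ⊕ Fin s} {h2 h3} (v : (Aᶜ : Finset V)) :
    Sum.inl (corestrictFn A f h2 h3 v).1 = f v.1 := by
  unfold corestrictFn
  split
  · rename_i u' h'
    exact h'.symm
  · rename_i w h'
    exact absurd h' (h3 v.1 (Finset.mem_compl.mp v.2) w)

noncomputable def extendFn (g : A → (A : Finset V) ⊕ Fin s)
    (h : (Aᶜ : Finset V) → (Aᶜ : Finset V)) : V → V ⊕ Fin s :=
  fun v => if hv : v ∈ A then Sum.map Subtype.val id (g ⟨v, hv⟩)
    else Sum.inl (h ⟨v, Finset.mem_compl.mpr hv⟩).1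

lemma reaches_restrictFn {f : V → V ⊕ Fin s} {h1} :
    ∀ k (v : V) (hv : v ∈ A) (w : Fin s), (pstep f)^[k] (Sum.inl v) = Sum.inr w →
      Reaches (restrictFn A f h1) ⟨v, hv⟩ := by
  intro k
  induction k with
  | zero => intro v hv w h; simp at h
  | succ k ih =>
    intro v hv w h
    rw [Function.iterate_succ_apply] at h
    have hsv : pstep f (Sum.inl v) = f v := rfl
    rw [hsv] at h
    cases hfv : f v with
    | inl u =>
      rw [hfv] at h
      have hu : u ∈ A := h1 v hv u hfv
      exact reaches_of_inl (restrictFn_inl A hfv hu) (ih u hu w h)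
    | inr w' =>
      exact reaches_of_inr (restrictFn_inr A hfv)

lemma reaches_extendFn {g : A → (A : Finset V) ⊕ Fin s} {h : (Aᶜ : Finset V) → (Aᶜ : Finset V)} :
    ∀ k (v : A) (w : Fin s), (pstep g)^[k] (Sum.inl v) = Sum.inr w →
      Reaches (extendFn A g h) v.1 := by
  intro k
  induction k with
  | zero => intro v w hw; simp at hw
  | succ k ih =>
    intro v w hw
    rw [Function.iterate_succ_apply] at hw
    have hsv : pstep g (Sum.inl v) = g v := rfl
    rw [hsv] at hw
    have hext : extendFn A g h v.1 = Sum.map Subtype.val id (g v) := by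
      rw [extendFn, dif_pos v.2]
    cases hgv : g v with
    | inl u =>
      rw [hgv] at hw
      rw [hgv] at hext
      exact reaches_of_inl (by simpa using hext) (ih u w hw)
    | inr w' =>
      rw [hgv] at hext
      exact reaches_of_inr (by simpa using hext)

lemma stays_extendFn {g : A → (A : Finset V) ⊕ Fin s} {h : (Aᶜ : Finset V) → (Aᶜ : Finset V)} :
    ∀ k (v : V), v ∉ A → ∃ v', v' ∉ A ∧ (pstep (extendFn A g h))^[k] (Sum.inl v) = Sum.inl v' := by
  intro k
  induction k with
  | zero => intro v hv; exact ⟨v, hv, rfl⟩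
  | succ k ih =>
    intro v hv
    rw [Function.iterate_succ_apply]
    have hsv : pstep (extendFn A g h) (Sum.inl v) = extendFn A g h v := rfl
    rw [hsv]
    have hext : extendFn A g h v = Sum.inl (h ⟨v, Finset.mem_compl.mpr hv⟩).1 := by
      rw [extendFn, dif_neg hv]
    rw [hext]
    exact ih _ (Finset.mem_compl.mp (h ⟨v, Finset.mem_compl.mpr hv⟩).2)

lemma not_reaches_extendFn {g : A → (A : Finset V) ⊕ Fin s}
    {h : (Aᶜ : Finset V) → (Aᶜ : Finset V)} {v : V} (hv : v ∉ A) :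
    ¬ Reaches (extendFn A g h) v := by
  rintro ⟨k, w, hk⟩
  obtain ⟨v', -, hv'⟩ := stays_extendFn A k v hv
  rw [hk] at hv'
  cases hv'

/-- The decomposition equivalence for the fiber over `A`. -/
noncomputable def decompEquiv :
    {f : V → V ⊕ Fin s // reachSet f = A} ≃
      ({g : A → (A : Finset V) ⊕ Fin s // ForestFn g} × ((Aᶜ : Finset V) → (Aᶜ : Finset V))) where
  toFun := fun ⟨f, hf⟩ => by
    have hmem : ∀ v, (v ∈ A ↔ Reaches f v) := by
      intro v; rw [← hf, mem_reachSet]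
    have h1 : ∀ v ∈ A, ∀ u, f v = Sum.inl u → u ∈ A := fun v hv u hfv =>
      (hmem u).mpr (reaches_tail ((hmem v).mp hv) hfv)
    have h2 : ∀ v ∉ A, ∀ u, f v = Sum.inl u → u ∉ A := fun v hv u hfv hu =>
      hv ((hmem v).mpr (reaches_of_inl hfv ((hmem u).mp hu)))
    have h3 : ∀ v ∉ A, ∀ w, f v ≠ Sum.inr w := fun v hv w hfv =>
      hv ((hmem v).mpr (reaches_of_inr hfv))
    exact (⟨restrictFn A f h1, fun v => by
        obtain ⟨k, w, hk⟩ := (hmem v.1).mp v.2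
        exact reaches_restrictFn A k v.1 v.2 w hk⟩,
      corestrictFn A f h2 h3)
  invFun := fun ⟨⟨g, hg⟩, h⟩ => ⟨extendFn A g h, by
    ext v
    rw [mem_reachSet]
    constructor
    · intro hv
      by_contra hvA
      exact not_reaches_extendFn A hvA hv
    · intro hv
      obtain ⟨k, w, hk⟩ := hg ⟨v, hv⟩
      exact reaches_extendFn A k ⟨v, hv⟩ w hk⟩
  left_inv := by
    rintro ⟨f, hf⟩
    apply Subtype.ext
    simp only
    funext v
    by_cases hv : v ∈ A
    · rw [extendFn, dif_pos hv]
      cases hfv : f v with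
      | inl u =>
        have hu : u ∈ A := by
          have hmem : ∀ x, (x ∈ A ↔ Reaches f x) := fun x => by rw [← hf, mem_reachSet]
          exact (hmem u).mpr (reaches_tail ((hmem v).mp hv) hfv)
        rw [restrictFn_inl A hfv hu]
        simp
      | inr w =>
        rw [restrictFn_inr A hfv]
        simp
    · rw [extendFn, dif_neg hv]
      exact corestrictFn_spec A _
  right_inv := by
    rintro ⟨⟨g, hg⟩, h⟩
    simp only
    refine Prod.ext ?_ ?_
    · apply Subtype.ext
      simp only
      funext v
      have hext : extendFn A g h v.1 = Sum.map Subtype.val id (g ⟨v.1, v.2⟩) := by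
        rw [extendFn, dif_pos v.2]
      cases hgv : g ⟨v.1, v.2⟩ with
      | inl u =>
        rw [hgv] at hext
        have : extendFn A g h v.1 = Sum.inl u.1 := by simpa using hext
        rw [restrictFn_inl A this u.2]
      | inr w =>
        rw [hgv] at hext
        have : extendFn A g h v.1 = Sum.inr w := by simpa using hext
        rw [restrictFn_inr A this]
    · funext v
      apply Subtype.ext
      apply Sum.inl_injective
      rw [corestrictFn_spec A v, extendFn, dif_neg (Finset.mem_compl.mp v.2)]

end Decomp

-- counting
noncomputable def G (s m : ℕ) : ℕ := Nat.card {f : Fin m → Fin m ⊕ Fin s // ForestFn f}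

lemma card_forestFn (V : Type*) [Fintype V] [DecidableEq V] (s : ℕ) :
    Nat.card {f : V → V ⊕ Fin s // ForestFn f} = G s (Fintype.card V) :=
  Nat.card_congr (forestEquiv (Fintype.equivFin V))

variable {V : Type*} [Fintype V] [DecidableEq V] {s : ℕ}

lemma card_fiber (A : Finset V) :
    Nat.card {f : V → V ⊕ Fin s // reachSet f = A}
      = G s A.card * (Fintype.card V - A.card)^(Fintype.card V - A.card) := by
  classical
  rw [Nat.card_congr (decompEquiv A), Nat.card_prod]
  congr 1
  · rw [card_forestFn]
    congr 1
    exact Fintype.card_coe A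
  · rw [Nat.card_eq_fintype_card, Fintype.card_fun, Fintype.card_coe, Finset.card_compl]

lemma total_count :
    ∑ A : Finset V, Nat.card {f : V → V ⊕ Fin s // reachSet f = A}
      = (Fintype.card V + s)^(Fintype.card V) := by
  classical
  have h1 : Nat.card (V → V ⊕ Fin s) = (Fintype.card V + s)^(Fintype.card V) := by
    rw [Nat.card_eq_fintype_card, Fintype.card_fun, Fintype.card_sum, Fintype.card_fin]
  rw [← h1, ← Nat.card_congr (Equiv.sigmaFiberEquiv (reachSet : (V → V ⊕ Fin s) → Finset V))]
  rw [Nat.card_eq_fintype_card, Fintype.card_sigma]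
  apply Finset.sum_congr rfl
  intro A _
  rw [Nat.card_eq_fintype_card]

lemma recurrence (s m : ℕ) :
    ∑ k ∈ range (m+1), (m.choose k) * (G s k * (m-k)^(m-k)) = (m+s)^m := by
  classical
  have h := total_count (V := Fin m) (s := s)
  simp only [Fintype.card_fin] at h
  rw [← h]
  have h2 : ∀ A : Finset (Fin m), Nat.card {f : Fin m → Fin m ⊕ Fin s // reachSet f = A}
      = G s A.card * (m - A.card)^(m - A.card) := by
    intro A
    have := card_fiber (s := s) A
    simpa using this
  rw [Finset.sum_congr rfl (fun A _ => h2 A)]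
  rw [← Finset.sum_fiberwise_of_maps_to (g := fun A : Finset (Fin m) => A.card)
    (t := range (m+1)) (fun A _ => by
      simp only [mem_range]
      have := Finset.card_le_univ A
      simpa using Nat.lt_succ_of_le (by simpa using this))]
  apply Finset.sum_congr rfl
  intro k hk
  have hfilter : filter (fun A : Finset (Fin m) => A.card = k) univ = Finset.powersetCard k univ := by
    rw [Finset.powersetCard_eq_filter, Finset.powerset_univ]
  have e : ∀ A ∈ filter (fun i : Finset (Fin m) => i.card = k) univ,
      G s A.card * (m - A.card) ^ (m - A.card) = G s k * (m-k)^(m-k) := fun A hA => by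
    rw [Finset.mem_filter] at hA
    rw [hA.2]
  rw [Finset.sum_congr rfl e, Finset.sum_const, hfilter, Finset.card_powersetCard,
    Finset.card_univ, Fintype.card_fin, smul_eq_mul]


lemma G_eq (s : ℕ) : ∀ m, G s m = if m = 0 then 1 else s*(m+s)^(m-1) := by
  intro m
  induction m using Nat.strong_induction_on with
  | _ m ih =>
    have h1 := recurrence s m
    have h2 := abel_nat s m
    rw [Finset.sum_range_succ] at h1 h2
    have heq : ∑ k ∈ range m, m.choose k * (G s k * (m-k)^(m-k))
        = ∑ k ∈ range m, m.choose k * (if k = 0 then 1 else s*(k+s)^(k-1)) * (m-k)^(m-k) := by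
      apply Finset.sum_congr rfl
      intro k hk
      rw [ih k (mem_range.mp hk)]
      ring
    rw [heq] at h1
    have h3 := h1.trans h2.symm
    simp only [Nat.choose_self, Nat.sub_self, pow_zero, one_mul, mul_one] at h3
    exact Nat.add_left_cancel h3

/-- The number of forests consisting of `s` rooted trees whose `s` root
vertices are distinguishable but unlabelled, and whose `r` non-root vertices
are labelled `1,...,r`, equals `s * (r + s) ^ (r - 1)`. -/
theorem forest_count (r s : ℕ) (hr : 1 ≤ r) :
    Nat.card {f : Fin r → Fin r ⊕ Fin s // IsForestParentFn r s f}
      = s * (r + s) ^ (r - 1) := by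
  have hG : G s r = s * (r+s)^(r-1) := by
    rw [G_eq s r, if_neg (by omega)]
  have : Nat.card {f : Fin r → Fin r ⊕ Fin s // ForestFn f} = s * (r+s)^(r-1) := by
    rw [← hG]; rfl
  exact this
end

section
/- For the simple random walk on a finite connected graph D, the expected hitting time of a vertex w starting from a vertex v is at most 2·E(D)·ρ(v,w), where ρ(v,w) is the effective electrical resistance between v and w when each edge has unit resistance. -/
open Finset Matrix

/-- A unit flow from `v` to `w` in the graph `G`: an antisymmetric function on
ordered pairs, supported on edges of `G`, with zero divergence away from `v`
and `w`, and with one unit of flow leaving `v`. -/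
def IsUnitFlow {V : Type*} [Fintype V] (G : SimpleGraph V) (v w : V)
    (θ : V → V → ℝ) : Prop :=
  (∀ a b, θ a b = -θ b a) ∧ (∀ a b, ¬ G.Adj a b → θ a b = 0) ∧
    (∀ a, a ≠ v → a ≠ w → ∑ b, θ a b = 0) ∧ (∑ b, θ v b = 1)

/-- The energy dissipated by a flow `θ` (each edge a unit resistor); the
factor `1/2` accounts for each edge being counted in both orientations. -/
noncomputable def flowEnergy {V : Type*} [Fintype V] (θ : V → V → ℝ) : ℝ :=
  (1 / 2) * ∑ a, ∑ b, (θ a b) ^ 2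

/-- The effective electrical resistance between `v` and `w` when each edge of
`G` has unit resistance, via Thomson's principle: the infimum of the energy
over all unit flows from `v` to `w`. -/
noncomputable def effRes {V : Type*} [Fintype V] (G : SimpleGraph V)
    (v w : V) : ℝ :=
  ⨅ θ : {θ : V → V → ℝ // IsUnitFlow G v w θ}, flowEnergy θ.1

/-- Fredholm alternative for symmetric real matrices. -/
lemma aux_fredholm {V : Type*} [Fintype V] [DecidableEq V] (A : Matrix V V ℝ)
    (hA : A.IsSymm) (b : V → ℝ) (hb : ∀ y, A.mulVec y = 0 → b ⬝ᵥ y = 0) :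
    ∃ x, A.mulVec x = b := by
  by_contra hx
  push_neg at hx
  have hbm : b ∉ LinearMap.range A.mulVecLin := by
    rintro ⟨x, hx'⟩
    exact hx x hx'
  obtain ⟨f, hfb, hmap⟩ :=
    Submodule.exists_dual_map_eq_bot_of_notMem hbm inferInstance
  set y : V → ℝ := fun i => f (Pi.single i 1) with hy
  have hf : ∀ x : V → ℝ, f x = x ⬝ᵥ y := by
    intro x
    have hxe : x = ∑ i, x i • (Pi.single i 1 : V → ℝ) := by
      ext j
      simp [Pi.single_apply]
    conv_lhs => rw [hxe, map_sum]
    simp [dotProduct, y]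
  have hyz : ∀ z, (A.mulVec z) ⬝ᵥ y = 0 := by
    intro z
    have hz : A.mulVec z ∈ LinearMap.range A.mulVecLin := ⟨z, rfl⟩
    have : f (A.mulVec z) = 0 := by
      have := hmap ▸ Submodule.mem_map_of_mem (f := f) hz
      simpa using this
    rwa [hf] at this
  have hAy : A.mulVec y = 0 := by
    have h1 : ∀ z, (A.mulVec y) ⬝ᵥ z = 0 := by
      intro z
      have h2 := hyz z
      rw [dotProduct_comm, dotProduct_mulVec, ← mulVec_transpose, hA.eq] at h2
      exact h2
    have := h1 (A.mulVec y)
    exact dotProduct_self_eq_zero.mp this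
  have := hb y hAy
  rw [← hf] at this
  exact hfb this

/-- Propagation of a predicate along walks. -/
lemma aux_walk_prop {V : Type*} {G : SimpleGraph V} {P : V → Prop}
    (hstep : ∀ a, P a → ∀ b, G.Adj a b → P b) {x y : V} (p : G.Walk x y)
    (hx : P x) : P y := by
  induction p with
  | nil => exact hx
  | cons h _ ih => exact ih (hstep _ hx _ h)

/-- Summation by parts for antisymmetric kernels. -/
lemma aux_sum_by_parts {V : Type*} [Fintype V] (θ : V → V → ℝ)
    (hanti : ∀ a b, θ a b = -θ b a) (g : V → ℝ) :
    ∑ a, ∑ b, θ a b * (g a - g b) = 2 * ∑ a, g a * ∑ b, θ a b := by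
  have h : ∀ a b : V, θ a b * (g a - g b) = θ a b * g a + θ b a * g b := by
    intro a b; rw [hanti b a]; ring
  simp_rw [h, Finset.sum_add_distrib]
  rw [Finset.sum_comm (f := fun a b => θ b a * g b)]
  simp_rw [← Finset.sum_mul, two_mul]
  congr 1 <;> · congr 1; ext a; ring

lemma aux_sum_ite_adj {V : Type*} [Fintype V] [DecidableEq V] (G : SimpleGraph V)
    [DecidableRel G.Adj] (a : V) (f : V → ℝ) :
    ∑ b, (if G.Adj a b then f b else 0) = ∑ b ∈ G.neighborFinset a, f b := by
  rw [SimpleGraph.neighborFinset_eq_filter, Finset.sum_filter]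

/-- The "discrete Laplacian" of `f` as a full sum over the vertex set. -/
lemma aux_lap_sum {V : Type*} [Fintype V] [DecidableEq V] (G : SimpleGraph V)
    [DecidableRel G.Adj] (a : V) (f : V → ℝ) :
    ∑ b, (if G.Adj a b then f a - f b else 0)
      = (G.degree a : ℝ) * f a - ∑ b ∈ G.neighborFinset a, f b := by
  have h : ∀ b : V, (if G.Adj a b then f a - f b else 0)
      = (if G.Adj a b then f a else 0) - (if G.Adj a b then f b else 0) := by
    intro b; split_ifs <;> ring
  simp_rw [h, Finset.sum_sub_distrib, aux_sum_ite_adj]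
  congr 1
  rw [Finset.sum_const, SimpleGraph.card_neighborFinset_eq_degree, nsmul_eq_mul]

/-- Existence of the potential for unit current flow from `v` to `w`,
normalized so that it vanishes at `w`. -/
lemma aux_exists_potential {V : Type*} [Fintype V] [DecidableEq V]
    (G : SimpleGraph V) [DecidableRel G.Adj] (hconn : G.Connected) (v w : V) :
    ∃ φ : V → ℝ, φ w = 0 ∧ ∀ a, (G.degree a : ℝ) * φ a - ∑ b ∈ G.neighborFinset a, φ b
      = (if a = v then 1 else 0) - (if a = w then 1 else 0) := by
  set b : V → ℝ := fun a => (if a = v then 1 else 0) - (if a = w then 1 else 0) with hbdef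
  have hb : ∀ y, (G.lapMatrix ℝ).mulVec y = 0 → b ⬝ᵥ y = 0 := by
    intro y hy
    have hreach : ∀ i j, G.Reachable i j → y i = y j := by
      rw [← SimpleGraph.lapMatrix_mulVec_eq_zero_iff_forall_reachable]
      exact hy
    have hvw : y v = y w := hreach v w (hconn v w)
    simp [hbdef, dotProduct, sub_mul, Finset.sum_sub_distrib, hvw]
  obtain ⟨x, hx⟩ := aux_fredholm (G.lapMatrix ℝ) (SimpleGraph.isSymm_lapMatrix ℝ G) b hb
  refine ⟨fun a => x a - x w, by simp, fun a => ?_⟩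
  have h1 := congrFun hx a
  rw [SimpleGraph.lapMatrix_mulVec_apply] at h1
  have h2 : ∑ c ∈ G.neighborFinset a, (x c - x w)
      = (∑ c ∈ G.neighborFinset a, x c) - (G.degree a : ℝ) * x w := by
    rw [Finset.sum_sub_distrib, Finset.sum_const,
      SimpleGraph.card_neighborFinset_eq_degree, nsmul_eq_mul]
  show (G.degree a : ℝ) * (x a - x w) - ∑ c ∈ G.neighborFinset a, (x c - x w)
      = (if a = v then 1 else 0) - (if a = w then 1 else 0)
  rw [h2]
  have h1' : (G.degree a : ℝ) * x a - ∑ u ∈ G.neighborFinset a, x u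
      = (if a = v then 1 else 0) - (if a = w then 1 else 0) := by
    simpa [hbdef] using h1
  linarith

lemma aux_grad_anti {V : Type*} (G : SimpleGraph V) [DecidableRel G.Adj]
    (f : V → ℝ) (a b : V) :
    (if G.Adj a b then f a - f b else 0) = -(if G.Adj b a then f b - f a else 0) := by
  by_cases h : G.Adj a b
  · rw [if_pos h, if_pos h.symm]; ring
  · rw [if_neg h, if_neg (fun hh => h hh.symm), neg_zero]

lemma aux_delta_sum {V : Type*} [Fintype V] [DecidableEq V] (g : V → ℝ) (v w : V) :
    ∑ a, g a * ((if a = v then (1:ℝ) else 0) - (if a = w then 1 else 0)) = g v - g w := by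
  simp [mul_sub, Finset.sum_sub_distrib, mul_ite, mul_one, mul_zero, Finset.sum_ite_eq']

/-- For the simple random walk on a finite connected graph, the expected
hitting time of a vertex `w` starting from `v` is at most `2 E(G) ρ(v, w)`,
where `ρ(v, w)` is the effective resistance between `v` and `w`.  Here `t`
is the expected hitting time of `w`, characterized by its harmonic
equations. -/
theorem hitting_time_le_resistance (V : Type*) [Fintype V] [DecidableEq V]
    (G : SimpleGraph V) [DecidableRel G.Adj]
    (hconn : G.Connected) (v w : V) (hvw : v ≠ w)
    (t : V → ℝ) (h0 : t w = 0)
    (ht : ∀ u, u ≠ w →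
      t u = 1 + (∑ x ∈ G.neighborFinset u, t x) / (G.degree u : ℝ)) :
    t v ≤ 2 * (G.edgeFinset.card : ℝ) * effRes G v w := by
  classical
  have hdeg : ∀ a : V, 0 < G.degree a := by
    intro a
    rw [G.degree_pos_iff_exists_adj]
    obtain ⟨x, hxa⟩ : ∃ x : V, x ≠ a := by
      rcases eq_or_ne v a with rfl | h
      · exact ⟨w, Ne.symm hvw⟩
      · exact ⟨v, h⟩
    obtain ⟨p⟩ := hconn a x
    cases p with
    | nil => exact absurd rfl hxa
    | cons h _ => exact ⟨_, h⟩
  have hdegR : ∀ a : V, (G.degree a : ℝ) ≠ 0 :=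
    fun a => Nat.cast_ne_zero.mpr (hdeg a).ne'
  obtain ⟨φ, hφw, hφ⟩ := aux_exists_potential G hconn v w
  have hdiv : ∀ a, ∑ b, (if G.Adj a b then φ a - φ b else 0)
      = (if a = v then (1:ℝ) else 0) - (if a = w then 1 else 0) := by
    intro a; rw [aux_lap_sum]; exact hφ a
  -- the gradient of φ is a unit flow
  have hflow : IsUnitFlow G v w (fun a b => if G.Adj a b then φ a - φ b else 0) := by
    refine ⟨fun a b => aux_grad_anti G φ a b, fun a b h => if_neg h,
      fun a hav haw => ?_, ?_⟩
    · show ∑ b, (if G.Adj a b then φ a - φ b else 0) = 0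
      rw [hdiv a, if_neg hav, if_neg haw, sub_zero]
    · show ∑ b, (if G.Adj v b then φ v - φ b else 0) = 1
      rw [hdiv v, if_pos rfl, if_neg hvw, sub_zero]
  -- energy identity for the gradient flow
  have hsq : ∑ a, ∑ b, (if G.Adj a b then φ a - φ b else 0)^2 = 2 * φ v := by
    have h1 : ∀ a b : V, (if G.Adj a b then φ a - φ b else 0)^2
        = (if G.Adj a b then φ a - φ b else 0) * (φ a - φ b) := by
      intro a b; split_ifs <;> ring
    simp_rw [h1]
    rw [aux_sum_by_parts (fun a b => if G.Adj a b then φ a - φ b else 0)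
      (fun a b => aux_grad_anti G φ a b) φ]
    simp_rw [hdiv]
    rw [aux_delta_sum φ v w, hφw, sub_zero]
  have hφv : 0 ≤ φ v := by
    have h0' : (0:ℝ) ≤ ∑ a, ∑ b, (if G.Adj a b then φ a - φ b else 0)^2 :=
      Finset.sum_nonneg fun a _ => Finset.sum_nonneg fun b _ => sq_nonneg _
    linarith [hsq]
  -- maximum principle : φ attains its maximum at v
  have hmax : ∀ a, φ a ≤ φ v := by
    by_contra hc
    push_neg at hc
    obtain ⟨a0, ha0⟩ := hc
    obtain ⟨m, -, hm⟩ := Finset.exists_max_image Finset.univ φ ⟨a0, Finset.mem_univ a0⟩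
    have hvM : φ v < φ m := lt_of_lt_of_le ha0 (hm a0 (Finset.mem_univ a0))
    have hstep : ∀ a, φ a = φ m → ∀ c, G.Adj a c → φ c = φ m := by
      intro a haM c hac
      by_contra hcM
      have hcM' : φ c < φ m := lt_of_le_of_ne (hm c (Finset.mem_univ c)) hcM
      have hav : a ≠ v := by
        rintro rfl
        exact absurd haM (ne_of_lt hvM)
      have hlt : ∑ x ∈ G.neighborFinset a, φ x < (G.degree a : ℝ) * φ m := by
        have h1 := Finset.sum_lt_sum (f := φ) (g := fun _ => φ m)
          (fun i _ => hm i (Finset.mem_univ i))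
          ⟨c, (SimpleGraph.mem_neighborFinset G a c).mpr hac, hcM'⟩
        simpa [Finset.sum_const, SimpleGraph.card_neighborFinset_eq_degree,
          nsmul_eq_mul] using h1
      have h1 := hφ a
      rw [if_neg hav, haM] at h1
      have h2 : (0:ℝ) ≤ (if a = w then (1:ℝ) else 0) := by split_ifs <;> norm_num
      linarith
    have hfin : φ v = φ m := by
      obtain ⟨p⟩ := hconn m v
      exact aux_walk_prop (P := fun x => φ x = φ m) hstep p rfl
    exact absurd hfin (ne_of_lt hvM)
  -- the key identity : t v = ∑ deg a * φ a
  have key_t : t v = ∑ a, φ a * (G.degree a : ℝ) := by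
    have hLt : ∀ a, φ a * ((G.degree a : ℝ) * t a - ∑ x ∈ G.neighborFinset a, t x)
        = φ a * (G.degree a : ℝ) := by
      intro a
      rcases eq_or_ne a w with rfl | haw
      · rw [hφw, zero_mul, zero_mul]
      · have h1 := ht a haw
        have h2 : (G.degree a : ℝ) * t a - ∑ x ∈ G.neighborFinset a, t x
            = (G.degree a : ℝ) := by
          rw [h1]
          field_simp [hdegR a]
          ring
        rw [h2]
    have hA : ∑ a, ∑ b, (if G.Adj a b then φ a - φ b else 0) * (t a - t b)
        = 2 * t v := by
      rw [aux_sum_by_parts (fun a b => if G.Adj a b then φ a - φ b else 0)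
        (fun a b => aux_grad_anti G φ a b) t]
      simp_rw [hdiv]
      rw [aux_delta_sum t v w, h0, sub_zero]
    have hB : ∑ a, ∑ b, (if G.Adj a b then t a - t b else 0) * (φ a - φ b)
        = 2 * ∑ a, φ a * (G.degree a : ℝ) := by
      rw [aux_sum_by_parts (fun a b => if G.Adj a b then t a - t b else 0)
        (fun a b => aux_grad_anti G t a b) φ]
      congr 1
      refine Finset.sum_congr rfl fun a _ => ?_
      rw [aux_lap_sum]
      exact hLt a
    have hAB : ∀ a b : V, (if G.Adj a b then φ a - φ b else 0) * (t a - t b)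
        = (if G.Adj a b then t a - t b else 0) * (φ a - φ b) := by
      intro a b; split_ifs <;> ring
    simp_rw [hAB] at hA
    rw [hB] at hA
    linarith
  -- lower bound on the energy of any unit flow
  have hE : ∀ θ : V → V → ℝ, IsUnitFlow G v w θ → φ v ≤ flowEnergy θ := by
    rintro θ ⟨hanti, hsupp, hdiv0, hdivv⟩
    have hpair : ∑ a, ∑ b, θ a b * (if G.Adj a b then φ a - φ b else 0)
        = 2 * φ v := by
      have h1 : ∀ a b : V, θ a b * (if G.Adj a b then φ a - φ b else 0)
          = θ a b * (φ a - φ b) := by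
        intro a b
        by_cases h : G.Adj a b
        · rw [if_pos h]
        · rw [if_neg h, hsupp a b h, zero_mul, zero_mul]
      simp_rw [h1]
      rw [aux_sum_by_parts θ hanti φ]
      congr 1
      have h2 : ∀ a : V, φ a * ∑ b, θ a b
          = φ a * ((if a = v then (1:ℝ) else 0) - (if a = w then 1 else 0)) := by
        intro a
        rcases eq_or_ne a v with rfl | hav
        · rw [hdivv, if_pos rfl, if_neg hvw, sub_zero]
        · rcases eq_or_ne a w with rfl | haw
          · rw [hφw, zero_mul, zero_mul]
          · rw [hdiv0 a hav haw, if_neg hav, if_neg haw]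
            norm_num
      rw [Finset.sum_congr rfl fun a _ => h2 a, aux_delta_sum φ v w, hφw, sub_zero]
    -- Cauchy-Schwarz
    have hcs := Finset.sum_mul_sq_le_sq_mul_sq Finset.univ
      (fun p : V × V => θ p.1 p.2)
      (fun p : V × V => if G.Adj p.1 p.2 then φ p.1 - φ p.2 else 0)
    rw [Fintype.sum_prod_type, Fintype.sum_prod_type, Fintype.sum_prod_type] at hcs
    rw [hpair, hsq] at hcs
    have hθsq : (0:ℝ) ≤ ∑ a, ∑ b, (θ a b)^2 :=
      Finset.sum_nonneg fun a _ => Finset.sum_nonneg fun b _ => sq_nonneg _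
    rw [flowEnergy]
    rcases hφv.eq_or_lt with h | h
    · nlinarith
    · nlinarith
  -- conclusion
  have hne : Nonempty {θ : V → V → ℝ // IsUnitFlow G v w θ} := ⟨⟨_, hflow⟩⟩
  have hres : φ v ≤ effRes G v w := le_ciInf fun θ => hE θ.1 θ.2
  have hm : (∑ a, (G.degree a : ℝ)) = 2 * (G.edgeFinset.card : ℝ) := by
    exact_mod_cast congrArg (Nat.cast : ℕ → ℝ) (SimpleGraph.sum_degrees_eq_twice_card_edges G)
  calc t v = ∑ a, φ a * (G.degree a : ℝ) := key_t
    _ ≤ ∑ a, φ v * (G.degree a : ℝ) :=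
        Finset.sum_le_sum fun a _ =>
          mul_le_mul_of_nonneg_right (hmax a) (Nat.cast_nonneg _)
    _ = 2 * (G.edgeFinset.card : ℝ) * φ v := by rw [← Finset.mul_sum, hm]; ring
    _ ≤ 2 * (G.edgeFinset.card : ℝ) * effRes G v w := by
        apply mul_le_mul_of_nonneg_left hres
        positivity
end

section
/- Let B be a finite weighted graph with edge-Cheeger constant Φ(B) ≥ α, and let B₁ be a weighted graph (possibly with self-loops) on the same vertex set as B that contains all edges of B with at least their original weights, such that the weighted degree of each vertex in B₁ is at most 1/α times its weighted degree in B. Then Φ(B₁) ≥ α². -/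
open Finset

/-- Let `B` be a finite weighted graph given by a symmetric nonnegative edge
weight function `w` (possibly with self-loops), with edge-Cheeger constant at
least `α` (expressed by the defining inequality: for every vertex set `S` of
positive volume at most half the total volume, the weight of the edge boundary
of `S` is at least `α` times the volume of `S`).  Let `B₁` be obtained by
adding edges (possibly self-loops) and increasing edge weights — i.e. `w₁` is
symmetric with `w ≤ w₁` pointwise — so that the weighted degree of each vertex
in `B₁` is at most `1/α` times its weighted degree in `B`.  Then the
edge-Cheeger constant of `B₁` is at least `α²`. -/
theorem cheeger_decorated (V : Type*) [Fintype V] [DecidableEq V]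
    (α : ℝ) (hα0 : 0 < α) (hα1 : α ≤ 1)
    (w w₁ : V → V → ℝ)
    (hsym : ∀ a b, w a b = w b a) (hnn : ∀ a b, 0 ≤ w a b)
    (hsym₁ : ∀ a b, w₁ a b = w₁ b a)
    (hmono : ∀ a b, w a b ≤ w₁ a b)
    (hdeg : ∀ a, ∑ b, w₁ a b ≤ (1 / α) * ∑ b, w a b)
    (hcheeger : ∀ S : Finset V,
      0 < ∑ a ∈ S, ∑ b, w a b →
      (∑ a ∈ S, ∑ b, w a b) ≤ (∑ a, ∑ b, w a b) / 2 →
      α * (∑ a ∈ S, ∑ b, w a b) ≤ ∑ a ∈ S, ∑ b ∈ Sᶜ, w a b) :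
    ∀ S : Finset V,
      0 < ∑ a ∈ S, ∑ b, w₁ a b →
      (∑ a ∈ S, ∑ b, w₁ a b) ≤ (∑ a, ∑ b, w₁ a b) / 2 →
      α ^ 2 * (∑ a ∈ S, ∑ b, w₁ a b) ≤ ∑ a ∈ S, ∑ b ∈ Sᶜ, w₁ a b := by
  intro S hpos hhalf
  -- degree comparison on any finset
  have hdegT : ∀ T : Finset V,
      α * ∑ a ∈ T, ∑ b, w₁ a b ≤ ∑ a ∈ T, ∑ b, w a b := by
    intro T
    have h : ∑ a ∈ T, ∑ b, w₁ a b ≤ (1 / α) * ∑ a ∈ T, ∑ b, w a b := by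
      rw [Finset.mul_sum]
      exact Finset.sum_le_sum fun a _ => hdeg a
    have h2 := mul_le_mul_of_nonneg_left h hα0.le
    have h3 : α * ((1 / α) * ∑ a ∈ T, ∑ b, w a b) = ∑ a ∈ T, ∑ b, w a b := by
      field_simp
    linarith
  have hbd : ∑ a ∈ S, ∑ b ∈ Sᶜ, w a b ≤ ∑ a ∈ S, ∑ b ∈ Sᶜ, w₁ a b :=
    Finset.sum_le_sum fun a _ => Finset.sum_le_sum fun b _ => hmono a b
  have hvolS_pos : 0 < ∑ a ∈ S, ∑ b, w a b := by
    linarith [hdegT S, mul_pos hα0 hpos]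
  by_cases hc : (∑ a ∈ S, ∑ b, w a b) ≤ (∑ a, ∑ b, w a b) / 2
  · -- Case 1: S is small in B too
    have h1 := hcheeger S hvolS_pos hc
    have h2 := mul_le_mul_of_nonneg_left (hdegT S) hα0.le
    nlinarith
  · -- Case 2: use the complement
    push_neg at hc
    have hsplit : (∑ a ∈ S, ∑ b, w a b) + (∑ a ∈ Sᶜ, ∑ b, w a b)
        = ∑ a, ∑ b, w a b := Finset.sum_add_sum_compl S _
    have hsplit₁ : (∑ a ∈ S, ∑ b, w₁ a b) + (∑ a ∈ Sᶜ, ∑ b, w₁ a b)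
        = ∑ a, ∑ b, w₁ a b := Finset.sum_add_sum_compl S _
    have hSc_half : (∑ a ∈ Sᶜ, ∑ b, w a b) ≤ (∑ a, ∑ b, w a b) / 2 := by
      linarith
    -- vol₁(Sᶜ) ≥ vol₁(S)
    have hvol₁ : (∑ a ∈ S, ∑ b, w₁ a b) ≤ ∑ a ∈ Sᶜ, ∑ b, w₁ a b := by
      linarith
    -- vol(Sᶜ) ≥ α vol₁(Sᶜ) > 0
    have hdegSc := hdegT Sᶜ
    have hvolSc_pos : 0 < ∑ a ∈ Sᶜ, ∑ b, w a b := by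
      linarith [mul_pos hα0 (lt_of_lt_of_le hpos hvol₁)]
    have h1 := hcheeger Sᶜ hvolSc_pos hSc_half
    -- boundary symmetry
    have hbsym : ∑ a ∈ Sᶜ, ∑ b ∈ Sᶜᶜ, w a b = ∑ a ∈ S, ∑ b ∈ Sᶜ, w a b := by
      rw [compl_compl, Finset.sum_comm]
      exact Finset.sum_congr rfl fun a _ => Finset.sum_congr rfl fun b _ => hsym b a
    rw [hbsym] at h1
    nlinarith [mul_le_mul_of_nonneg_left hdegSc hα0.le,
      mul_le_mul_of_nonneg_left hvol₁ (mul_pos hα0 hα0).le]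
end

section
/- For a random multigraph on n vertices with m = O(n) edges generated by choosing each endpoint of each of the m edges uniformly at random and independently from the n vertices, the probability that the resulting multigraph is simple (no loops and no multiple edges) is bounded below by a positive constant independent of n. -/
def IsSimpleConfig {n m : ℕ} (f : Fin m → Fin n × Fin n) : Prop :=
  (∀ j, (f j).1 ≠ (f j).2) ∧
    ∀ j k, j ≠ k →
      ¬(((f j).1 = (f k).1 ∧ (f j).2 = (f k).2) ∨
        ((f j).1 = (f k).2 ∧ (f j).2 = (f k).1))

open Finset

lemma diag_card (n : ℕ) :
    (univ.filter (fun v : Fin n × Fin n => v.1 = v.2)).card = n := by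
  have h : (univ.filter (fun v : Fin n × Fin n => v.1 = v.2))
      = univ.image (fun x : Fin n => (x, x)) := by
    ext v
    simp only [mem_filter, mem_univ, true_and, mem_image]
    constructor
    · intro h; exact ⟨v.1, by cases v; simp_all⟩
    · rintro ⟨x, rfl⟩; rfl
  rw [h, card_image_of_injective _ (fun a b h => by simpa using h)]
  simp

lemma good_card {n m : ℕ} (g : Fin m → Fin n × Fin n) :
    n^2 - n - 2*m ≤ (univ.filter (fun v : Fin n × Fin n =>
      ¬(v.1 = v.2 ∨ ∃ k, ((v.1 = (g k).1 ∧ v.2 = (g k).2) ∨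
        (v.1 = (g k).2 ∧ v.2 = (g k).1))))).card := by
  classical
  have htot := Finset.card_filter_add_card_filter_not
    (s := (univ : Finset (Fin n × Fin n)))
    (p := fun v : Fin n × Fin n => v.1 = v.2 ∨ ∃ k, ((v.1 = (g k).1 ∧ v.2 = (g k).2) ∨
        (v.1 = (g k).2 ∧ v.2 = (g k).1)))
  simp only [card_univ, Fintype.card_prod, Fintype.card_fin] at htot
  beta_reduce at htot
  rw [show n*n = n^2 from (sq n).symm] at htot
  have hsub : (univ.filter (fun v : Fin n × Fin n => v.1 = v.2 ∨ ∃ k, ((v.1 = (g k).1 ∧ v.2 = (g k).2) ∨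
        (v.1 = (g k).2 ∧ v.2 = (g k).1)))) ⊆ (univ.filter (fun v : Fin n × Fin n => v.1 = v.2)) ∪
      univ.biUnion (fun k => ({g k, ((g k).2, (g k).1)} : Finset (Fin n × Fin n))) := by
    intro v hv
    simp only [mem_filter, mem_univ, true_and] at hv
    rcases hv with h | ⟨k, hk⟩
    · exact mem_union_left _ (by simpa using h)
    · refine mem_union_right _ (mem_biUnion.2 ⟨k, mem_univ _, ?_⟩)
      rcases hk with ⟨h1, h2⟩ | ⟨h1, h2⟩
      · simp only [mem_insert, mem_singleton]
        left; cases v; simp_all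
      · simp only [mem_insert, mem_singleton]
        right; cases v; simp_all
  have hbad : (univ.filter (fun v : Fin n × Fin n => v.1 = v.2 ∨ ∃ k, ((v.1 = (g k).1 ∧ v.2 = (g k).2) ∨
        (v.1 = (g k).2 ∧ v.2 = (g k).1)))).card ≤ n + 2*m := by
    calc _ ≤ _ := card_le_card hsub
      _ ≤ (univ.filter (fun v : Fin n × Fin n => v.1 = v.2)).card +
          (univ.biUnion (fun k => ({g k, ((g k).2, (g k).1)} : Finset (Fin n × Fin n)))).card :=
        card_union_le _ _
      _ ≤ n + 2*m := by
        refine Nat.add_le_add (le_of_eq (diag_card n)) ?_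
        calc (univ.biUnion _).card ≤ ∑ k : Fin m, ({g k, ((g k).2, (g k).1)} : Finset (Fin n × Fin n)).card :=
            card_biUnion_le
          _ ≤ ∑ _k : Fin m, 2 := by
            refine sum_le_sum fun k _ => ?_
            exact (card_insert_le _ _).trans (by simp)
          _ = 2*m := by simp [mul_comm]
  omega

lemma snoc_simple {n m : ℕ} {g : Fin m → Fin n × Fin n} (hg : IsSimpleConfig g)
    {v : Fin n × Fin n}
    (hv : ¬(v.1 = v.2 ∨ ∃ k, ((v.1 = (g k).1 ∧ v.2 = (g k).2) ∨
        (v.1 = (g k).2 ∧ v.2 = (g k).1)))) :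
    IsSimpleConfig (Fin.snoc g v) := by
  have hv1 : v.1 ≠ v.2 := fun h => hv (Or.inl h)
  have hv2 : ∀ k, ¬((v.1 = (g k).1 ∧ v.2 = (g k).2) ∨
      (v.1 = (g k).2 ∧ v.2 = (g k).1)) := fun k h => hv (Or.inr ⟨k, h⟩)
  constructor
  · intro j
    rcases Fin.eq_castSucc_or_eq_last j with ⟨i, rfl⟩ | rfl
    · simpa [Fin.snoc_castSucc] using hg.1 i
    · simpa [Fin.snoc_last] using hv1
  · intro j k hjk
    rcases Fin.eq_castSucc_or_eq_last j with ⟨a, rfl⟩ | rfl <;>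
      rcases Fin.eq_castSucc_or_eq_last k with ⟨b, rfl⟩ | rfl
    · simp only [Fin.snoc_castSucc]
      exact hg.2 a b (fun h => hjk (by rw [h]))
    · simp only [Fin.snoc_castSucc, Fin.snoc_last]
      intro h
      rcases h with ⟨h1, h2⟩ | ⟨h1, h2⟩
      · exact hv2 a (Or.inl ⟨h1.symm, h2.symm⟩)
      · exact hv2 a (Or.inr ⟨h2.symm, h1.symm⟩)
    · simp only [Fin.snoc_castSucc, Fin.snoc_last]
      exact hv2 b
    · exact absurd rfl hjk

lemma card_step (n m : ℕ) :
    Nat.card {f : Fin m → Fin n × Fin n // IsSimpleConfig f} * (n^2 - n - 2*m)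
      ≤ Nat.card {f : Fin (m+1) → Fin n × Fin n // IsSimpleConfig f} := by
  classical
  rw [Nat.card_eq_fintype_card, Nat.card_eq_fintype_card, Fintype.card_subtype,
    Fintype.card_subtype]
  set S := univ.filter (fun f : Fin m → Fin n × Fin n => IsSimpleConfig f) with hS
  set T := fun g : Fin m → Fin n × Fin n => univ.filter (fun v : Fin n × Fin n =>
      ¬(v.1 = v.2 ∨ ∃ k, ((v.1 = (g k).1 ∧ v.2 = (g k).2) ∨
        (v.1 = (g k).2 ∧ v.2 = (g k).1)))) with hT
  have hmain : (S.sigma T).card ≤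
      (univ.filter (fun f : Fin (m+1) → Fin n × Fin n => IsSimpleConfig f)).card := by
    refine card_le_card_of_injOn
      (fun p : Σ _ : Fin m → Fin n × Fin n, Fin n × Fin n => Fin.snoc p.1 p.2) ?_ ?_
    · intro p hp
      rw [mem_coe, mem_sigma] at hp
      simp only [hS, hT, mem_coe, mem_filter, mem_univ, true_and] at hp ⊢
      exact snoc_simple hp.1 hp.2
    · intro p _ q _ h
      have h1 : p.1 = q.1 := funext fun i => by
        have := congrFun h (Fin.castSucc i); simpa using this
      have h2 : p.2 = q.2 := by
        have := congrFun h (Fin.last m); simpa using this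
      exact Sigma.ext h1 (heq_of_eq h2)
  calc S.card * (n^2 - n - 2*m) = S.card • (n^2 - n - 2*m) := by rw [smul_eq_mul]
    _ ≤ ∑ g ∈ S, (T g).card := card_nsmul_le_sum _ _ _ (fun g _ => good_card g)
    _ = (S.sigma T).card := (card_sigma _ _).symm
    _ ≤ _ := hmain

lemma card_ge (n M : ℕ) : ∀ m, m ≤ M →
    (n^2 - n - 2*M)^m ≤ Nat.card {f : Fin m → Fin n × Fin n // IsSimpleConfig f} := by
  intro m
  induction m with
  | zero =>
    intro _
    have hne : Nonempty {f : Fin 0 → Fin n × Fin n // IsSimpleConfig f} :=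
      ⟨⟨fun j => j.elim0, fun j => j.elim0, fun j => j.elim0⟩⟩
    simpa using Nat.card_pos
  | succ m ih =>
    intro h
    calc (n^2-n-2*M)^(m+1) = (n^2-n-2*M)^m * (n^2-n-2*M) := pow_succ _ _
      _ ≤ Nat.card {f : Fin m → Fin n × Fin n // IsSimpleConfig f} * (n^2 - n - 2*m) :=
        Nat.mul_le_mul (ih (by omega)) (Nat.sub_le_sub_left (by omega) _)
      _ ≤ _ := card_step n m

lemma exp_le_one_sub (x : ℝ) (h0 : 0 ≤ x) (h1 : x ≤ 1/2) :
    Real.exp (-(2*x)) ≤ 1 - x := by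
  have h2 : 2*x + 1 ≤ Real.exp (2*x) := Real.add_one_le_exp (2*x)
  have h3 : Real.exp (-(2*x)) * Real.exp (2*x) = 1 := by
    rw [← Real.exp_add]; simp
  nlinarith [Real.exp_pos (-(2*x)), Real.exp_pos (2*x)]

/-- For a random multigraph on `n` vertices with `m = O(n)` edges (say
`m ≤ K n`) generated by choosing each endpoint of each of the `m` edges
uniformly at random and independently from the `n` vertices, the probability
that the resulting multigraph is simple (no loops and no multiple edges) is
bounded below by a positive constant independent of `n` (for all `n`
sufficiently large). -/
theorem config_simple_prob (K : ℕ) :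
    ∃ C : ℝ, 0 < C ∧ ∃ N : ℕ, ∀ n m : ℕ, N ≤ n → m ≤ K * n →
      C ≤ (Nat.card {f : Fin m → Fin n × Fin n // IsSimpleConfig f} : ℝ) /
            (Nat.card (Fin m → Fin n × Fin n) : ℝ) := by
  classical
  refine ⟨Real.exp (-(2*(2*K+1)*K)), Real.exp_pos _, 2*(2*K+1), fun n m hn hm => ?_⟩
  have hn0 : 0 < n := by omega
  have hden : Nat.card (Fin m → Fin n × Fin n) = (n*n)^m := by
    simp [Nat.card_eq_fintype_card]
  -- natural number counting bound
  have hgn : (2*K+1)*n ≤ n^2 := by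
    have : (2*K+1) ≤ n := by omega
    calc (2*K+1)*n ≤ n*n := Nat.mul_le_mul_right n this
      _ = n^2 := (sq n).symm
  have hsub : n^2 - (2*K+1)*n ≤ n^2 - n - 2*m := by
    have h1 : n^2 - n - 2*m = n^2 - (n + 2*m) := by omega
    have h2 : n^2 - (2*K+1)*n = n^2 - (n + 2*(K*n)) := by
      congr 1; ring
    rw [h1, h2]
    exact Nat.sub_le_sub_left (Nat.add_le_add_left (Nat.mul_le_mul_left 2 hm) n) _
  have hcount : (n^2 - (2*K+1)*n)^m
      ≤ Nat.card {f : Fin m → Fin n × Fin n // IsSimpleConfig f} :=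
    (Nat.pow_le_pow_left hsub m).trans (card_ge n m m le_rfl)
  -- move to the reals
  set a : ℝ := 2*K+1 with ha
  have han : (0:ℝ) < n := by exact_mod_cast hn0
  have hcast : ((n^2 - (2*K+1)*n : ℕ) : ℝ) = n*n - a*n := by
    rw [Nat.cast_sub hgn]; push_cast [ha]; ring
  have hB : (n*n - a*n : ℝ)^m
      ≤ (Nat.card {f : Fin m → Fin n × Fin n // IsSimpleConfig f} : ℝ) := by
    rw [← hcast]
    exact_mod_cast hcount
  have hxa : a/n ≤ 1/2 := by
    rw [div_le_div_iff₀ han (by norm_num)]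
    have : (2:ℝ)*(2*K+1) ≤ n := by exact_mod_cast hn
    nlinarith
  have hx0 : (0:ℝ) ≤ a/n := by positivity
  have hexp : Real.exp (-(2*(a/n))) ≤ 1 - a/n := exp_le_one_sub _ hx0 hxa
  have hbase0 : (0:ℝ) ≤ 1 - a/n := le_trans (Real.exp_pos _).le hexp
  have hbase1 : (1:ℝ) - a/n ≤ 1 := by nlinarith
  -- C ≤ (1 - a/n)^m
  have hC : Real.exp (-(2*(2*K+1)*K)) ≤ (1 - a/n)^m := by
    have step1 : Real.exp (-(2*(2*K+1)*K)) ≤ Real.exp (-(2*(a/n))*m) := by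
      apply Real.exp_le_exp.2
      have hm' : (m:ℝ) ≤ K*n := by exact_mod_cast hm
      rw [ha]
      rw [neg_mul, neg_le_neg_iff]
      calc 2*((2*(K:ℝ)+1)/n)*m ≤ 2*((2*(K:ℝ)+1)/n)*(K*n) := by
            apply mul_le_mul_of_nonneg_left hm' (by positivity)
        _ = 2*(2*(K:ℝ)+1)*K := by field_simp
    have step2 : Real.exp (-(2*(a/n))*m) = (Real.exp (-(2*(a/n))))^m := by
      rw [← Real.exp_nat_mul]; ring_nf
    have step3 : (Real.exp (-(2*(a/n))))^m ≤ (1 - a/n)^m :=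
      pow_le_pow_left₀ (Real.exp_pos _).le hexp m
    calc Real.exp (-(2*(2*K+1)*K)) ≤ _ := step1
      _ = _ := step2
      _ ≤ _ := step3
  -- put it together
  rw [hden]
  have hpow : (0:ℝ) < ((n*n)^m : ℕ) := by positivity
  rw [le_div_iff₀ hpow]
  have hprod : (1 - a/n)^m * ((n*n)^m : ℕ) = (n*n - a*n : ℝ)^m := by
    push_cast
    rw [← mul_pow]
    congr 1
    field_simp
  calc Real.exp (-(2*(2*K+1)*K)) * ((n*n)^m : ℕ)
      ≤ (1 - a/n)^m * ((n*n)^m : ℕ) := by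
        apply mul_le_mul_of_nonneg_right hC (by positivity)
    _ = (n*n - a*n : ℝ)^m := hprod
    _ ≤ _ := hB
end
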